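/- arXiv:2405.10152 — 2 statements merged into one kernel-verified Lean document; each statement's English description precedes it below -/
import Mathlib

section
/- In an extensional BI(_)•-algebra, if a has arity l → m and b has arity m → n, then a ∘ b has arity l → n. -/
namespace Paper

/-- An applicative structure with distinguished elements `B`, `I` and
a unary operation `bul` (written `a•` in the paper). -/
structure BIStruct (α : Type*) where
  ap : α → α → α
  B : α
  I : α
  bul : α → α

namespace BIStruct

variable {α : Type*}

/-- `a ∘ b := B a b`. -/
def comp (S : BIStruct α) (a b : α) : α := S.ap (S.ap S.B a) b

/-- Powers: `a⁰ = I`, `a^(n+1) = a ∘ aⁿ`. -/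
def pow (S : BIStruct α) (a : α) : ℕ → α
  | 0 => S.I
  | n + 1 => S.comp a (S.pow a n)

/-- `a` has arity `m → n` iff `a• ∘ B^(m+1) = (B a) ∘ Bⁿ`. -/
def hasArity (S : BIStruct α) (a : α) (m n : ℕ) : Prop :=
  S.comp (S.bul a) (S.pow S.B (m + 1)) = S.comp (S.ap S.B a) (S.pow S.B n)

/-- The axioms of an extensional BI(_)•-algebra. -/
structure IsExt (S : BIStruct α) : Prop where
  hB : ∀ a b c, S.ap (S.ap (S.ap S.B a) b) c = S.ap a (S.ap b c)
  hI : ∀ a, S.ap S.I a = a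
  hBul : ∀ a b, S.ap (S.bul a) b = S.ap b a
  hLam : S.ap S.B S.I = S.I
  hBulApp : ∀ a b, S.bul (S.ap a b) = S.comp (S.bul b) (S.comp (S.bul a) S.B)
  hArityB : S.comp (S.bul S.B) (S.comp S.B (S.comp S.B S.B)) = S.comp (S.ap S.B S.B) S.B
  hArityI : S.comp (S.bul S.I) S.B = S.ap S.B S.I
  hArityBul : ∀ a, S.comp (S.bul (S.bul a)) S.B = S.comp (S.ap S.B (S.bul a)) S.B

end BIStruct

end Paper

namespace Paper.BIStruct

variable {α : Type*} {S : BIStruct α}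

/-- One-argument consequence of `hArityB`: `(B (B a)) ∘ B = B ∘ (B a)`. -/
lemma hom1 (hS : S.IsExt) (a : α) :
    S.comp (S.ap S.B (S.ap S.B a)) S.B = S.comp S.B (S.ap S.B a) := by
  have h := congrArg (fun t => S.ap t a) hS.hArityB
  simpa [comp, hS.hB, hS.hBul] using h

/-- `B` is a homomorphism: `(B a) ∘ (B b) = B (a ∘ b)`. -/
lemma hom (hS : S.IsExt) (a b : α) :
    S.comp (S.ap S.B a) (S.ap S.B b) = S.ap S.B (S.comp a b) := by
  have h := congrArg (fun t => S.ap t b) (hom1 hS a)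
  simpa [comp, hS.hB] using h

/-- Associativity of composition. -/
lemma assoc' (hS : S.IsExt) (x y z : α) :
    S.comp (S.comp x y) z = S.comp x (S.comp y z) := by
  have h := congrArg (fun t => S.ap t z) (hom hS x y)
  simpa [comp, hS.hB] using h.symm

/-- Commutation: `x ∘ c• = c• ∘ (B x)`. -/
lemma star (hS : S.IsExt) (x c : α) :
    S.comp x (S.bul c) = S.comp (S.bul c) (S.ap S.B x) := by
  have h := congrArg (fun t => S.ap t x) (hS.hArityBul c)
  simpa [comp, hS.hB, hS.hBul] using h

lemma chain2 (hS : S.IsExt) {x y u v : α} (h : S.comp x y = S.comp u v) (t : α) :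
    S.comp x (S.comp y t) = S.comp u (S.comp v t) := by
  rw [← assoc' hS, h, assoc' hS]

lemma chain4 (hS : S.IsExt) {x y z w u v : α}
    (h : S.comp x (S.comp y (S.comp z w)) = S.comp u v) (t : α) :
    S.comp x (S.comp y (S.comp z (S.comp w t))) = S.comp u (S.comp v t) := by
  rw [← assoc' hS z w t, ← assoc' hS y (S.comp z w) t,
    ← assoc' hS x (S.comp y (S.comp z w)) t, h, assoc' hS]

end Paper.BIStruct

/-- If `a : l → m` and `b : m → n`, then `a ∘ b : l → n`. -/
theorem stmt_4 {α : Type*} (S : Paper.BIStruct α) (hS : S.IsExt)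
    {a b : α} {l m n : ℕ} (ha : S.hasArity a l m) (hb : S.hasArity b m n) :
    S.hasArity (S.comp a b) l n := by
  open Paper.BIStruct in
  have eA : S.bul (S.comp a b)
      = S.comp (S.bul b)
          (S.comp (S.comp (S.bul a) (S.comp (S.bul S.B) S.B)) S.B) := by
    show S.bul (S.ap (S.ap S.B a) b) = _
    rw [hS.hBulApp, hS.hBulApp]
  show S.comp (S.bul (S.comp a b)) (S.pow S.B (l + 1))
      = S.comp (S.ap S.B (S.comp a b)) (S.pow S.B n)
  calc S.comp (S.bul (S.comp a b)) (S.pow S.B (l + 1))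
      = S.comp (S.bul b) (S.comp (S.bul a)
          (S.comp (S.bul S.B) (S.comp S.B (S.comp S.B (S.comp S.B (S.pow S.B l)))))) := by
        rw [eA]; simp only [assoc' hS]; rfl
    _ = S.comp (S.bul b) (S.comp (S.bul a)
          (S.comp (S.ap S.B S.B) (S.pow S.B (l + 1)))) := by
        exact congrArg (fun t => S.comp (S.bul b) (S.comp (S.bul a) t))
          (chain4 hS hS.hArityB (S.pow S.B l))
    _ = S.comp (S.bul b) (S.comp S.B (S.comp (S.bul a) (S.pow S.B (l + 1)))) := by
        exact congrArg (fun t => S.comp (S.bul b) t)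
          (chain2 hS (star hS S.B a).symm (S.pow S.B (l + 1)))
    _ = S.comp (S.bul b) (S.comp S.B (S.comp (S.ap S.B a) (S.pow S.B m))) := by
        exact congrArg (fun t => S.comp (S.bul b) (S.comp S.B t)) ha
    _ = S.comp (S.bul b) (S.comp (S.ap S.B (S.ap S.B a)) (S.pow S.B (m + 1))) := by
        exact congrArg (fun t => S.comp (S.bul b) t)
          (chain2 hS (hom1 hS a).symm (S.pow S.B m))
    _ = S.comp (S.ap S.B a) (S.comp (S.bul b) (S.pow S.B (m + 1))) := by
        exact chain2 hS (star hS (S.ap S.B a) b).symm (S.pow S.B (m + 1))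
    _ = S.comp (S.ap S.B a) (S.comp (S.ap S.B b) (S.pow S.B n)) := by
        exact congrArg (fun t => S.comp (S.ap S.B a) t) hb
    _ = S.comp (S.ap S.B (S.comp a b)) (S.pow S.B n) := by
        rw [← assoc' hS, hom hS]
end

section
/- In an extensional BI(_)•-algebra, if a has arity m → n, then a also has arity (m+1) → (n+1). -/
namespace Paper.BIStruct

variable {α : Type*} {S : BIStruct α}

/-- Associativity of `∘`, obtained by applying `hArityB` to three arguments. -/
lemma comp_assoc (hS : S.IsExt) (x y z : α) :
    S.comp x (S.comp y z) = S.comp (S.comp x y) z := by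
  have h := congrArg (fun t => S.ap (S.ap (S.ap t x) y) z) hS.hArityB
  simpa [BIStruct.comp, hS.hB, hS.hBul] using h

/-- Right identity for `∘`, obtained by applying `hArityI` to one argument. -/
lemma comp_I (hS : S.IsExt) (b : α) : S.comp b S.I = b := by
  have h := congrArg (fun t => S.ap t b) hS.hArityI
  simp only [BIStruct.comp, hS.hB, hS.hBul, hS.hLam, hS.hI] at h
  simpa [BIStruct.comp] using h

lemma pow_comm (hS : S.IsExt) (b : α) (k : ℕ) :
    S.comp b (S.pow b k) = S.comp (S.pow b k) b := by
  induction k with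
  | zero =>
      show S.comp b S.I = S.comp S.I b
      rw [comp_I hS]
      show b = S.ap (S.ap S.B S.I) b
      rw [hS.hLam, hS.hI]
  | succ k ih =>
      show S.comp b (S.comp b (S.pow b k)) = S.comp (S.comp b (S.pow b k)) b
      rw [ih, comp_assoc hS, ih]

end Paper.BIStruct

/-- If `a` has arity `m → n`, then `a` also has arity `(m+1) → (n+1)`. -/
theorem stmt_5 {α : Type*} (S : Paper.BIStruct α) (hS : S.IsExt)
    {a : α} {m n : ℕ} (h : S.hasArity a m n) :
    S.hasArity a (m + 1) (n + 1) := by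
  unfold Paper.BIStruct.hasArity at h ⊢
  show S.comp (S.bul a) (S.comp S.B (S.pow S.B (m + 1)))
      = S.comp (S.ap S.B a) (S.comp S.B (S.pow S.B n))
  rw [Paper.BIStruct.pow_comm hS, Paper.BIStruct.comp_assoc hS, h,
    ← Paper.BIStruct.comp_assoc hS, ← Paper.BIStruct.pow_comm hS]
end
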